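/- Under the projector hypotheses, the 4-tensor T = ρ[((n−2)(n−3)/2)(g⊙g) + (P⊙P) − (n−3)(g⊙P)] satisfies the full-trace identity (T·T)_{μν}{}^{μν} = 4(n−1)(n−2)²(n−3)·ρ². -/

import Mathlib

open Finset

variable {ι : Type*} [Fintype ι] [DecidableEq ι]

/-- Kulkarni–Nomizu product of two 2-tensors:
`(A⊙B)_{μνλκ} = A_{μλ}B_{νκ} − A_{νλ}B_{μκ} − A_{μκ}B_{νλ} + A_{νκ}B_{μλ}`. -/
def KN (A B : ι → ι → ℝ) : ι → ι → ι → ι → ℝ :=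
  fun μ ν l κ => A μ l * B ν κ - A ν l * B μ κ - A μ κ * B ν l + A ν κ * B μ l

/-- Contraction of two 2-tensors via the inverse metric:
`(A·B)_{μκ} = Σ_{ν,λ} A_{μν}(Ḡ⁻¹)_{νλ}B_{λκ}`. -/
def dot2 (Ginv : ι → ι → ℝ) (A B : ι → ι → ℝ) : ι → ι → ℝ :=
  fun μ κ => ∑ ν, ∑ l, A μ ν * Ginv ν l * B l κ

/-- Contraction of two 4-tensors via the inverse metric:
`(R·S)_{μνλκ} = Σ R_{μνστ}(Ḡ⁻¹)_{σσ'}(Ḡ⁻¹)_{ττ'}S_{σ'τ'λκ}`. -/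
def dot4 (Ginv : ι → ι → ℝ) (R S : ι → ι → ι → ι → ℝ) : ι → ι → ι → ι → ℝ :=
  fun μ ν l κ => ∑ σ, ∑ τ, ∑ σ', ∑ τ', R μ ν σ τ * Ginv σ σ' * Ginv τ τ' * S σ' τ' l κ

/-- Trace of a 2-tensor: `tr A = Σ_{μ,ν} (Ḡ⁻¹)_{μν}A_{νμ}`. -/
def tr2 (Ginv : ι → ι → ℝ) (A : ι → ι → ℝ) : ℝ :=
  ∑ μ, ∑ ν, Ginv μ ν * A ν μ

/-- Partial trace of a 4-tensor: `R_{μν}{}^ν{}_κ = Σ_{ν,ν'} (Ḡ⁻¹)_{νν'} R_{μνν'κ}`. -/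
def ptr4 (Ginv : ι → ι → ℝ) (R : ι → ι → ι → ι → ℝ) : ι → ι → ℝ :=
  fun μ κ => ∑ ν, ∑ ν', Ginv ν ν' * R μ ν ν' κ

/-- Full trace of a 4-tensor: `R_{μν}{}^{μν} = Σ (Ḡ⁻¹)_{μμ'}(Ḡ⁻¹)_{νν'} R_{μνμ'ν'}`. -/
def ftr4 (Ginv : ι → ι → ℝ) (R : ι → ι → ι → ι → ℝ) : ℝ :=
  ∑ μ, ∑ μ', ∑ ν, ∑ ν', Ginv μ μ' * Ginv ν ν' * R μ ν μ' ν'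

/-- The curvature 4-tensor of a generalized Schwarzschild–Tangherlini geometry,
`T = ρ[((n−2)(n−3)/2)(g⊙g) + (P⊙P) − (n−3)(g⊙P)]`. -/
noncomputable def Tgst (n : ℕ) (ρ : ℝ) (g P : ι → ι → ℝ) : ι → ι → ι → ι → ℝ :=
  fun μ ν l κ => ρ * (((n : ℝ) - 2) * ((n : ℝ) - 3) / 2 * KN g g μ ν l κ
    + KN P P μ ν l κ - ((n : ℝ) - 3) * KN g P μ ν l κ)

/-!
Kulkarni–Nomizu products compose by `(A⊙B)·(C⊙D) = 2 (AC⊙BD + AD⊙BC)`. Since `Ḡ⁻¹` is symmetric,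
`P·g = (g·P)ᵀ = 0`, so for the orthogonal idempotents `g`, `P` all cross terms vanish and
`T·T = ρ² [(n−2)²(n−3)² g⊙g + 4 P⊙P + 2(n−3)² g⊙P]`. For symmetric `X`, `Y` the full trace of
`X⊙Y` is `2 tr X tr Y − tr(XY) − tr(YX)`, which with `tr g = 2`, `tr P = n − 2` gives the value.
-/

section

variable {m : Type*}

@[simp] lemma KN_zero_left (B : m → m → ℝ) : KN 0 B = 0 := by
  funext μ ν l κ; simp [KN]

@[simp] lemma KN_zero_right (A : m → m → ℝ) : KN A 0 = 0 := by
  funext μ ν l κ; simp [KN]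

lemma Tgst_eq_smul_add (n : ℕ) (ρ : ℝ) (g P : m → m → ℝ) :
    Tgst n ρ g P = (ρ * (((n : ℝ) - 2) * ((n : ℝ) - 3) / 2)) • KN g g + ρ • KN P P
      + (-(ρ * ((n : ℝ) - 3))) • KN g P := by
  funext μ ν l κ
  simp only [Tgst, Pi.add_apply, Pi.smul_apply, smul_eq_mul]
  ring

variable [Fintype m] (G : m → m → ℝ)

def dot4Bilin :
    (m → m → m → m → ℝ) →ₗ[ℝ] (m → m → m → m → ℝ) →ₗ[ℝ] (m → m → m → m → ℝ) :=
  LinearMap.mk₂ ℝ (dot4 G)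
    (fun R R' S => by
      funext μ ν l κ; simp only [dot4, Pi.add_apply, add_mul, sum_add_distrib])
    (fun c R S => by
      funext μ ν l κ; simp only [dot4, Pi.smul_apply, smul_eq_mul, mul_sum, mul_assoc])
    (fun R S S' => by
      funext μ ν l κ; simp only [dot4, Pi.add_apply, mul_add, sum_add_distrib])
    (fun c R S => by
      funext μ ν l κ
      simp only [dot4, Pi.smul_apply, smul_eq_mul, mul_sum, mul_comm, mul_left_comm])

@[simp] lemma dot4Bilin_apply (R S : m → m → m → m → ℝ) : dot4Bilin G R S = dot4 G R S := rfl

def ftr4Linear : (m → m → m → m → ℝ) →ₗ[ℝ] ℝ where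
  toFun := ftr4 G
  map_add' R S := by simp only [ftr4, Pi.add_apply, mul_add, sum_add_distrib]
  map_smul' c R := by
    simp only [ftr4, Pi.smul_apply, smul_eq_mul, mul_sum, RingHom.id_apply, mul_left_comm]

@[simp] lemma ftr4Linear_apply (R : m → m → m → m → ℝ) : ftr4Linear G R = ftr4 G R := rfl

lemma sum_contract_mul_eq_dot2_mul_dot2 (A B C D : m → m → ℝ) (μ ν l κ : m) :
    ∑ σ, ∑ τ, ∑ σ', ∑ τ', (A μ σ * B ν τ) * G σ σ' * G τ τ' * (C σ' l * D τ' κ)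
      = dot2 G A C μ l * dot2 G B D ν κ := by
  simp only [dot2, sum_mul_sum]
  exact sum_congr rfl fun σ _ => sum_congr rfl fun τ _ => sum_congr rfl fun σ' _ =>
    sum_congr rfl fun τ' _ => by ring

lemma dot4_KN_KN (A B C D : m → m → ℝ) :
    dot4 G (KN A B) (KN C D)
      = 2 • KN (dot2 G A C) (dot2 G B D) + 2 • KN (dot2 G A D) (dot2 G B C) := by
  funext μ ν l κ
  -- each of the 16 products below has the shape of `sum_contract_mul_eq_dot2_mul_dot2`
  have summand : ∀ σ τ σ' τ', KN A B μ ν σ τ * G σ σ' * G τ τ' * KN C D σ' τ' l κ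
      = (A μ σ * B ν τ - A ν σ * B μ τ - B ν σ * A μ τ + B μ σ * A ν τ) * G σ σ' * G τ τ'
        * (C σ' l * D τ' κ - D σ' κ * C τ' l - C σ' κ * D τ' l + D σ' l * C τ' κ) := by
    intros; simp only [KN]; ring
  simp only [dot4, summand, add_mul, sub_mul, mul_add, mul_sub, sum_add_distrib,
    sum_sub_distrib, sum_contract_mul_eq_dot2_mul_dot2]
  simp only [KN, Pi.add_apply, Pi.smul_apply]
  ring

lemma tr2_mul_tr2 (X Y : m → m → ℝ) :
    tr2 G X * tr2 G Y = ∑ μ, ∑ μ', ∑ ν, ∑ ν', G μ μ' * X μ' μ * (G ν ν' * Y ν' ν) := by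
  simp_rw [tr2, sum_mul, mul_sum]

lemma tr2_dot2 (X Y : m → m → ℝ) :
    tr2 G (dot2 G X Y) = ∑ μ, ∑ μ', ∑ ν, ∑ ν', G μ μ' * (X μ' ν * G ν ν' * Y ν' μ) := by
  simp only [tr2, dot2, mul_sum]

lemma ftr4_KN {X Y : m → m → ℝ} (hX : ∀ μ ν, X μ ν = X ν μ) (hY : ∀ μ ν, Y μ ν = Y ν μ) :
    ftr4 G (KN X Y) = 2 * (tr2 G X * tr2 G Y) - tr2 G (dot2 G X Y) - tr2 G (dot2 G Y X) := by
  rw [two_mul]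
  nth_rw 2 [mul_comm]
  simp only [tr2_mul_tr2, tr2_dot2, ftr4, ← sum_add_distrib, ← sum_sub_distrib]
  refine sum_congr rfl fun μ _ => sum_congr rfl fun μ' _ => sum_congr rfl fun ν _ =>
    sum_congr rfl fun ν' _ => ?_
  simp only [KN]
  rw [hX μ' μ, hX μ' ν, hX ν' ν, hX ν' μ, hY ν' ν, hY ν' μ, hY μ' μ, hY μ' ν]
  ring

lemma symm_of_mul_eq_delta [DecidableEq m] {Gbar : m → m → ℝ}
    (hGsymm : ∀ μ ν, Gbar μ ν = Gbar ν μ)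
    (hGinv : ∀ μ l, ∑ ν, Gbar μ ν * G ν l = if μ = l then (1 : ℝ) else 0) (μ ν : m) :
    G μ ν = G ν μ := by
  have hmul : Matrix.of Gbar * Matrix.of G = 1 := by
    ext μ l
    simpa [Matrix.mul_apply, Matrix.one_apply] using hGinv μ l
  have hsymm : (Matrix.of G).IsSymm :=
    Matrix.inv_eq_right_inv hmul ▸ (Matrix.IsSymm.ext fun μ ν => hGsymm ν μ).inv
  exact hsymm.apply ν μ

lemma dot2_comm_of_symm {A B : m → m → ℝ} (hG : ∀ μ ν, G μ ν = G ν μ)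
    (hA : ∀ μ ν, A μ ν = A ν μ) (hB : ∀ μ ν, B μ ν = B ν μ) (μ ν : m) :
    dot2 G A B μ ν = dot2 G B A ν μ := by
  rw [dot2, dot2, sum_comm]
  refine sum_congr rfl fun σ _ => sum_congr rfl fun τ _ => ?_
  rw [hA, hB, hG]
  ring

lemma dot4_self_of_orthogonal_idempotents {g P : m → m → ℝ}
    (hgg : dot2 G g g = g) (hPP : dot2 G P P = P) (hgP : dot2 G g P = 0) (hPg : dot2 G P g = 0)
    (a b c : ℝ) :
    dot4 G (a • KN g g + b • KN P P + c • KN g P) (a • KN g g + b • KN P P + c • KN g P)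
      = (4 * a ^ 2) • KN g g + (4 * b ^ 2) • KN P P + (2 * c ^ 2) • KN g P := by
  rw [← dot4Bilin_apply]
  simp only [map_add, map_smul, LinearMap.add_apply, LinearMap.smul_apply, dot4Bilin_apply,
    dot4_KN_KN, hgg, hPP, hgP, hPg, KN_zero_left, KN_zero_right, smul_zero, add_zero, zero_add]
  module

end

theorem Tgst_dot_Tgst_full_trace_general {n : ℕ}
    (Gbar Ginv g P : ι → ι → ℝ) (ρ : ℝ)
    (hGsymm : ∀ μ ν, Gbar μ ν = Gbar ν μ)
    (hGinv : ∀ μ l, ∑ ν, Gbar μ ν * Ginv ν l = if μ = l then (1 : ℝ) else 0)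
    (hgsymm : ∀ μ ν, g μ ν = g ν μ) (hPsymm : ∀ μ ν, P μ ν = P ν μ)
    (hgg : ∀ μ ν, dot2 Ginv g g μ ν = g μ ν)
    (hPP : ∀ μ ν, dot2 Ginv P P μ ν = P μ ν)
    (hgP : ∀ μ ν, dot2 Ginv g P μ ν = 0)
    (htrg : tr2 Ginv g = 2)
    (htrP : tr2 Ginv P = (n : ℝ) - 2)
    :
    ftr4 Ginv (dot4 Ginv (Tgst n ρ g P) (Tgst n ρ g P)) =
      4 * ((n : ℝ) - 1) * ((n : ℝ) - 2) ^ 2 * ((n : ℝ) - 3) * ρ ^ 2 := by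
  have hGinv_symm := symm_of_mul_eq_delta Ginv hGsymm hGinv
  have hPg : dot2 Ginv P g = 0 := by
    funext μ ν
    rw [dot2_comm_of_symm Ginv hGinv_symm hPsymm hgsymm, hgP, Pi.zero_apply, Pi.zero_apply]
  have hgg' : dot2 Ginv g g = g := funext fun μ => funext (hgg μ)
  have hPP' : dot2 Ginv P P = P := funext fun μ => funext (hPP μ)
  have hgP' : dot2 Ginv g P = 0 := funext fun μ => funext (hgP μ)
  rw [Tgst_eq_smul_add, dot4_self_of_orthogonal_idempotents Ginv hgg' hPP' hgP' hPg,
    ← ftr4Linear_apply]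
  simp only [map_add, map_smul, ftr4Linear_apply, smul_eq_mul]
  rw [ftr4_KN Ginv hgsymm hgsymm, ftr4_KN Ginv hPsymm hPsymm, ftr4_KN Ginv hgsymm hPsymm,
    hgg', hPP', hgP', hPg, htrg, htrP]
  simp only [tr2, Pi.zero_apply, mul_zero, sum_const_zero]
  ring

/-- Under the projector hypotheses,
`(T·T)_{μν}{}^{μν} = 4(n−1)(n−2)²(n−3)·ρ²`. -/
theorem Tgst_dot_Tgst_full_trace {n : ℕ} (hn : 4 ≤ n) (hcard : Fintype.card ι = n)
    (Gbar Ginv g P : ι → ι → ℝ) (ρ : ℝ)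
    (hGsymm : ∀ μ ν, Gbar μ ν = Gbar ν μ)
    (hGinv : ∀ μ l, ∑ ν, Gbar μ ν * Ginv ν l = if μ = l then (1 : ℝ) else 0)
    (hsplit : ∀ μ ν, Gbar μ ν = g μ ν + P μ ν)
    (hgsymm : ∀ μ ν, g μ ν = g ν μ) (hPsymm : ∀ μ ν, P μ ν = P ν μ)
    (hgg : ∀ μ ν, dot2 Ginv g g μ ν = g μ ν)
    (hPP : ∀ μ ν, dot2 Ginv P P μ ν = P μ ν)
    (hgP : ∀ μ ν, dot2 Ginv g P μ ν = 0)
    (htrg : tr2 Ginv g = 2)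
    (htrP : tr2 Ginv P = (n : ℝ) - 2)
    :
    ftr4 Ginv (dot4 Ginv (Tgst n ρ g P) (Tgst n ρ g P)) =
      4 * ((n : ℝ) - 1) * ((n : ℝ) - 2) ^ 2 * ((n : ℝ) - 3) * ρ ^ 2 :=
  Tgst_dot_Tgst_full_trace_general Gbar Ginv g P ρ hGsymm hGinv hgsymm hPsymm hgg hPP hgP htrg htrP
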